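/- Let S be a tree structure on {1,…,n} with splits partitioned as S = S^(1) ⊔ … ⊔ S^(p) and let y ∈ ℝⁿ. Then for each feature k, n · MDI(k; S, y) = Σ_{s∈S^(k)} ⟨ψ_s, y⟩² / ‖ψ_s‖² = ‖P_k y‖², where P_k y is the orthogonal projection of y onto the linear span of the stumps {ψ_s : s ∈ S^(k)}; that is, n times the MDI of feature k equals the squared norm of the projection of the response vector onto the span of feature k's local decision stumps. -/

import Mathlib

open Finset MeasureTheory RealInnerProductSpace

/-- A split of a node into two disjoint nonempty children. -/
structure Split (n : ℕ) where
  left : Finset (Fin n)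
  right : Finset (Fin n)
  left_nonempty : left.Nonempty
  right_nonempty : right.Nonempty
  disjoint : Disjoint left right

/-- The node being split is the union of the two children. -/
def Split.node {n : ℕ} (s : Split n) : Finset (Fin n) := s.left ∪ s.right

/-- Mean of the responses `y` over a subset `t` of samples. -/
noncomputable def meanOn {n : ℕ} (y : Fin n → ℝ) (t : Finset (Fin n)) : ℝ :=
  (∑ i ∈ t, y i) / t.card

/-- Impurity decrease of a split. -/
noncomputable def impurityDecrease {n : ℕ} (s : Split n) (y : Fin n → ℝ) : ℝ :=
  (s.node.card : ℝ)⁻¹ *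
    (∑ i ∈ s.node, (y i - meanOn y s.node) ^ 2
      - ∑ i ∈ s.left, (y i - meanOn y s.left) ^ 2
      - ∑ i ∈ s.right, (y i - meanOn y s.right) ^ 2)

/-- The local decision stump associated to a split. -/
noncomputable def stump {n : ℕ} (s : Split n) : EuclideanSpace ℝ (Fin n) := WithLp.toLp 2 fun i =>
  if i ∈ s.left then (s.right.card : ℝ) / Real.sqrt (s.left.card * s.right.card)
  else if i ∈ s.right then -(s.left.card : ℝ) / Real.sqrt (s.left.card * s.right.card)
  else 0

/-- The constant vector of all ones. -/
noncomputable def ones (n : ℕ) : EuclideanSpace ℝ (Fin n) := WithLp.toLp 2 fun _ => 1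

/-- A tree structure: any two distinct splits have disjoint or suitably nested nodes. -/
def IsTreeStructure {n : ℕ} (S : Finset (Split n)) : Prop :=
  ∀ s ∈ S, ∀ s' ∈ S, s ≠ s' →
    s.node ∩ s'.node = ∅ ∨ s'.node ⊆ s.left ∨ s'.node ⊆ s.right ∨
      s.node ⊆ s'.left ∨ s.node ⊆ s'.right

/-- Mean decrease in impurity (MDI) of feature `k`, where `feat` assigns to each split the
feature it splits on. -/
noncomputable def MDI {n p : ℕ} (S : Finset (Split n)) (feat : Split n → Fin p)
    (k : Fin p) (y : Fin n → ℝ) : ℝ :=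
  (n : ℝ)⁻¹ * ∑ s ∈ S.filter (fun s => feat s = k), (s.node.card : ℝ) * impurityDecrease s y

/-- A rooted tree structure: a finite nonempty set of splits with pairwise distinct nodes,
exactly one of which is the full sample set, and every non-root node is a child of some split. -/
def IsRootedTree {n : ℕ} (S : Finset (Split n)) : Prop :=
  S.Nonempty ∧ Set.InjOn Split.node (↑S : Set (Split n)) ∧ (∃ s ∈ S, s.node = Finset.univ) ∧
    ∀ s ∈ S, s.node ≠ Finset.univ → ∃ s' ∈ S, s.node = s'.left ∨ s.node = s'.right

/-- The leaves of a rooted tree structure: children of splits that are not themselves split. -/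
def leafSet {n : ℕ} (S : Finset (Split n)) : Finset (Finset (Fin n)) :=
  (S.image Split.left ∪ S.image Split.right).filter fun t => ∀ s ∈ S, s.node ≠ t

namespace MDIAux

variable {n : ℕ}

lemma left_card_pos (s : Split n) : 0 < (s.left.card : ℝ) := by
  exact_mod_cast Finset.card_pos.2 s.left_nonempty

lemma right_card_pos (s : Split n) : 0 < (s.right.card : ℝ) := by
  exact_mod_cast Finset.card_pos.2 s.right_nonempty

lemma node_card (s : Split n) : (s.node.card : ℝ) = (s.left.card : ℝ) + s.right.card := by
  rw [Split.node, Finset.card_union_of_disjoint s.disjoint]; push_cast; ring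

lemma sqrt_sq' (s : Split n) :
    Real.sqrt ((s.left.card : ℝ) * s.right.card) ^ 2 = (s.left.card : ℝ) * s.right.card :=
  Real.sq_sqrt (by positivity)

lemma stump_left (s : Split n) {j : Fin n} (hj : j ∈ s.left) :
    stump s j = (s.right.card : ℝ) / Real.sqrt ((s.left.card : ℝ) * s.right.card) := by
  simp [stump, hj]

lemma stump_right (s : Split n) {j : Fin n} (hj : j ∈ s.right) :
    stump s j = -(s.left.card : ℝ) / Real.sqrt ((s.left.card : ℝ) * s.right.card) := by
  have h : j ∉ s.left := fun h => Finset.disjoint_left.mp s.disjoint h hj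
  simp [stump, h, hj]

lemma stump_not_mem (s : Split n) {j : Fin n} (hj : j ∉ s.node) : stump s j = 0 := by
  rw [Split.node, Finset.mem_union] at hj
  push_neg at hj
  simp [stump, hj.1, hj.2]

lemma sum_stump_mul (s : Split n) (f : Fin n → ℝ) :
    ∑ j, stump s j * f j =
      ((s.right.card : ℝ) * ∑ j ∈ s.left, f j - (s.left.card : ℝ) * ∑ j ∈ s.right, f j)
        / Real.sqrt ((s.left.card : ℝ) * s.right.card) := by
  rw [← Finset.sum_subset (Finset.subset_univ s.node)
      (fun j _ hj => by rw [stump_not_mem s hj, zero_mul])]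
  rw [Split.node, Finset.sum_union s.disjoint]
  have h1 : ∑ j ∈ s.left, stump s j * f j
      = ((s.right.card : ℝ) / Real.sqrt ((s.left.card : ℝ) * s.right.card)) * ∑ j ∈ s.left, f j := by
    rw [Finset.mul_sum]; exact Finset.sum_congr rfl fun j hj => by rw [stump_left s hj]
  have h2 : ∑ j ∈ s.right, stump s j * f j
      = (-(s.left.card : ℝ) / Real.sqrt ((s.left.card : ℝ) * s.right.card)) * ∑ j ∈ s.right, f j := by
    rw [Finset.mul_sum]; exact Finset.sum_congr rfl fun j hj => by rw [stump_right s hj]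
  rw [h1, h2]; ring

lemma sum_stump (s : Split n) : ∑ j ∈ s.node, stump s j = 0 := by
  have hl : ∑ j ∈ s.left, stump s j
      = (s.left.card : ℝ) * ((s.right.card : ℝ) / Real.sqrt ((s.left.card : ℝ) * s.right.card)) := by
    rw [show ∑ j ∈ s.left, stump s j
        = ∑ _j ∈ s.left, ((s.right.card : ℝ) / Real.sqrt ((s.left.card : ℝ) * s.right.card))
      from Finset.sum_congr rfl fun j hj => stump_left s hj, Finset.sum_const, nsmul_eq_mul]
  have hr : ∑ j ∈ s.right, stump s j
      = (s.right.card : ℝ) * (-(s.left.card : ℝ) / Real.sqrt ((s.left.card : ℝ) * s.right.card)) := by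
    rw [show ∑ j ∈ s.right, stump s j
        = ∑ _j ∈ s.right, (-(s.left.card : ℝ) / Real.sqrt ((s.left.card : ℝ) * s.right.card))
      from Finset.sum_congr rfl fun j hj => stump_right s hj, Finset.sum_const, nsmul_eq_mul]
  rw [Split.node, Finset.sum_union s.disjoint, hl, hr]
  ring

lemma sum_stump_sq (s : Split n) : ∑ j, stump s j ^ 2 = (s.node.card : ℝ) := by
  have hL := left_card_pos s
  have hR := right_card_pos s
  have hs : Real.sqrt ((s.left.card : ℝ) * s.right.card) ≠ 0 := by positivity
  rw [← Finset.sum_subset (Finset.subset_univ s.node)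
      (fun j _ hj => by rw [stump_not_mem s hj]; ring)]
  have hl : ∑ j ∈ s.left, stump s j ^ 2
      = (s.left.card : ℝ) * (((s.right.card : ℝ) / Real.sqrt ((s.left.card : ℝ) * s.right.card)) ^ 2) := by
    rw [show ∑ j ∈ s.left, stump s j ^ 2
        = ∑ _j ∈ s.left, (((s.right.card : ℝ) / Real.sqrt ((s.left.card : ℝ) * s.right.card)) ^ 2)
      from Finset.sum_congr rfl fun j hj => by rw [stump_left s hj], Finset.sum_const, nsmul_eq_mul]
  have hr : ∑ j ∈ s.right, stump s j ^ 2
      = (s.right.card : ℝ) * ((-(s.left.card : ℝ) / Real.sqrt ((s.left.card : ℝ) * s.right.card)) ^ 2) := by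
    rw [show ∑ j ∈ s.right, stump s j ^ 2
        = ∑ _j ∈ s.right, ((-(s.left.card : ℝ) / Real.sqrt ((s.left.card : ℝ) * s.right.card)) ^ 2)
      from Finset.sum_congr rfl fun j hj => by rw [stump_right s hj], Finset.sum_const, nsmul_eq_mul]
  rw [Split.node, Finset.sum_union s.disjoint, hl, hr, Finset.card_union_of_disjoint s.disjoint,
    div_pow, div_pow, sqrt_sq']
  push_cast
  field_simp
  ring

lemma sum_mul_stump_const (s' : Split n) (f : Fin n → ℝ) (c : ℝ)
    (hf : ∀ j ∈ s'.node, f j = c) : ∑ j, f j * stump s' j = 0 := by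
  rw [← Finset.sum_subset (Finset.subset_univ s'.node)
      (fun j _ hj => by rw [stump_not_mem s' hj, mul_zero])]
  calc ∑ j ∈ s'.node, f j * stump s' j = ∑ j ∈ s'.node, c * stump s' j :=
        Finset.sum_congr rfl fun j hj => by rw [hf j hj]
    _ = c * ∑ j ∈ s'.node, stump s' j := (Finset.mul_sum _ _ _).symm
    _ = 0 := by rw [sum_stump, mul_zero]

lemma stump_orthogonal {S : Finset (Split n)} (hS : IsTreeStructure S)
    {s s' : Split n} (hs : s ∈ S) (hs' : s' ∈ S) (hne : s ≠ s') :
    ∑ j, stump s j * stump s' j = 0 := by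
  rcases hS s hs s' hs' hne with h | h | h | h | h
  · refine Finset.sum_eq_zero fun j _ => ?_
    by_cases hj : j ∈ s.node
    · have hj' : j ∉ s'.node := fun hj' => by
        have : j ∈ s.node ∩ s'.node := Finset.mem_inter.2 ⟨hj, hj'⟩
        rw [h] at this; exact absurd this (Finset.notMem_empty j)
      rw [stump_not_mem s' hj', mul_zero]
    · rw [stump_not_mem s hj, zero_mul]
  · exact sum_mul_stump_const s' (stump s) _ fun j hj => stump_left s (h hj)
  · exact sum_mul_stump_const s' (stump s) _ fun j hj => stump_right s (h hj)
  · rw [show (∑ j, stump s j * stump s' j) = ∑ j, stump s' j * stump s j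
      from Finset.sum_congr rfl fun j _ => mul_comm _ _]
    exact sum_mul_stump_const s (stump s') _ fun j hj => stump_left s' (h hj)
  · rw [show (∑ j, stump s j * stump s' j) = ∑ j, stump s' j * stump s j
      from Finset.sum_congr rfl fun j _ => mul_comm _ _]
    exact sum_mul_stump_const s (stump s') _ fun j hj => stump_right s' (h hj)

lemma variance_identity (y : Fin n → ℝ) (t : Finset (Fin n)) (ht : (t.card : ℝ) ≠ 0) :
    ∑ i ∈ t, (y i - meanOn y t) ^ 2 = ∑ i ∈ t, y i ^ 2 - (∑ i ∈ t, y i) ^ 2 / t.card := by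
  have h : ∀ i ∈ t, (y i - meanOn y t) ^ 2
      = y i ^ 2 - 2 * meanOn y t * y i + meanOn y t ^ 2 := fun i _ => by ring
  rw [Finset.sum_congr rfl h, Finset.sum_add_distrib, Finset.sum_sub_distrib,
    Finset.sum_const, ← Finset.mul_sum, nsmul_eq_mul, meanOn]
  field_simp
  ring

lemma key (s : Split n) (y : Fin n → ℝ) :
    (s.node.card : ℝ) * impurityDecrease s y
      = (∑ j, stump s j * y j) ^ 2 / ∑ j, stump s j ^ 2 := by
  have hL := left_card_pos s
  have hR := right_card_pos s
  have hLne : (s.left.card : ℝ) ≠ 0 := ne_of_gt hL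
  have hRne : (s.right.card : ℝ) ≠ 0 := ne_of_gt hR
  have hNne : (s.node.card : ℝ) ≠ 0 := by rw [node_card]; positivity
  have hsum : ∑ i ∈ s.node, y i = ∑ i ∈ s.left, y i + ∑ i ∈ s.right, y i := by
    rw [Split.node, Finset.sum_union s.disjoint]
  have hsumsq : ∑ i ∈ s.node, y i ^ 2 = ∑ i ∈ s.left, y i ^ 2 + ∑ i ∈ s.right, y i ^ 2 := by
    rw [Split.node, Finset.sum_union s.disjoint]
  rw [impurityDecrease, ← mul_assoc, mul_inv_cancel₀ hNne, one_mul,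
    variance_identity y s.node hNne, variance_identity y s.left hLne,
    variance_identity y s.right hRne, sum_stump_mul, sum_stump_sq, hsum, hsumsq,
    div_pow, sqrt_sq', node_card]
  field_simp
  ring

end MDIAux

/-- `n` times the MDI of feature `k` equals `Σ_{s ∈ S⁽ᵏ⁾} ⟨ψ_s, y⟩² / ‖ψ_s‖²`, which is the
squared norm of the orthogonal projection of `y` onto the span of feature `k`'s stumps. -/
theorem n_mul_mdi_eq_sq_norm_projection {n p : ℕ} (S : Finset (Split n))
    (hS : IsTreeStructure S) (feat : Split n → Fin p) (k : Fin p)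
    (y : EuclideanSpace ℝ (Fin n)) :
    ((n : ℝ) * MDI S feat k (fun i => y i)
        = ∑ s ∈ S.filter (fun s => feat s = k),
            (∑ j, stump s j * y j) ^ 2 / ∑ j, stump s j ^ 2) ∧
    (n : ℝ) * MDI S feat k (fun i => y i)
        = ‖(Submodule.orthogonalProjection (Submodule.span ℝ
            (stump '' (↑(S.filter fun s => feat s = k) : Set (Split n)))) y :
              EuclideanSpace ℝ (Fin n))‖ ^ 2 := by
  classical
  open MDIAux in
  set F := S.filter (fun s => feat s = k) with hF
  have hinner : ∀ (x z : EuclideanSpace ℝ (Fin n)), ⟪x, z⟫ = ∑ j, x j * z j := fun x z => by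
    simp [PiLp.inner_apply, RCLike.inner_apply, mul_comm]
  by_cases hn : (n : ℝ) = 0
  · -- then F is empty since any split contains an element of Fin n
    have hFempty : F = ∅ := by
      rcases Finset.eq_empty_or_nonempty F with h | ⟨s, hs⟩
      · exact h
      · obtain ⟨i, _⟩ := s.left_nonempty
        have : (n : ℝ) ≠ 0 := by
          have : 0 < n := i.pos
          positivity
        exact absurd hn this
    have hMDI : MDI S feat k (fun i => y i) = (n : ℝ)⁻¹ * ∑ s ∈ F, (s.node.card : ℝ) * impurityDecrease s (fun i => y i) := rfl
    constructor
    · rw [hMDI, hFempty]; simp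
    · rw [hMDI, hFempty, Finset.coe_empty, Set.image_empty, Submodule.span_empty,
        Submodule.orthogonalProjection, Submodule.orthogonalProjectionOnto_bot]
      simp
  · have h1 : (n : ℝ) * MDI S feat k (fun i => y i)
        = ∑ s ∈ F, (∑ j, stump s j * y j) ^ 2 / ∑ j, stump s j ^ 2 := by
      rw [MDI, ← mul_assoc, mul_inv_cancel₀ hn, one_mul]
      exact Finset.sum_congr rfl fun s _ => key s (fun i => y i)
    refine ⟨h1, ?_⟩
    set K := Submodule.span ℝ (stump '' (↑F : Set (Split n))) with hK
    set v : EuclideanSpace ℝ (Fin n) :=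
      ∑ s ∈ F, ((∑ j, stump s j * y j) / (s.node.card : ℝ)) • stump s with hv
    have hmemF : ∀ s ∈ F, s ∈ S := fun s hs => (Finset.mem_filter.1 hs).1
    have hNpos : ∀ s : Split n, (0:ℝ) < (s.node.card : ℝ) := fun s => by
      rw [node_card]
      have := left_card_pos s; have := right_card_pos s; linarith
    have hvK : v ∈ K := Submodule.sum_mem _ fun s hs =>
      Submodule.smul_mem _ _ (Submodule.subset_span ⟨s, by exact_mod_cast hs, rfl⟩)
    have hvw : ∀ s₀ ∈ F, ⟪v, stump s₀⟫ = ∑ j, stump s₀ j * y j := by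
      intro s₀ hs₀
      rw [hv, sum_inner]
      have : ∀ s ∈ F, ⟪((∑ j, stump s j * y j) / (s.node.card : ℝ)) • stump s, stump s₀⟫
          = if s = s₀ then ∑ j, stump s₀ j * y j else 0 := by
        intro s hs
        rw [real_inner_smul_left, hinner]
        by_cases hss : s = s₀
        · subst hss
          rw [if_pos rfl]
          have h2 : ∑ j, stump s j * stump s j = (s.node.card : ℝ) := by
            rw [← sum_stump_sq s]; exact Finset.sum_congr rfl fun j _ => (sq (stump s j)).symm
          rw [h2, div_mul_cancel₀ _ (ne_of_gt (hNpos s))]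
        · rw [if_neg hss, stump_orthogonal hS (hmemF s hs) (hmemF s₀ hs₀) hss, mul_zero]
      rw [Finset.sum_congr rfl this, Finset.sum_ite_eq' F s₀, if_pos hs₀]
    have hproj : (Submodule.orthogonalProjection K y : EuclideanSpace ℝ (Fin n)) = v := by
      refine (Submodule.eq_starProjection_of_mem_of_inner_eq_zero (K := K) hvK ?_ : _)
      intro w hw
      induction hw using Submodule.span_induction with
      | mem x hx =>
        obtain ⟨s₀, hs₀, rfl⟩ := hx
        have hs₀F : s₀ ∈ F := by exact_mod_cast hs₀
        rw [inner_sub_left, hvw s₀ hs₀F, hinner]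
        have : ∑ j, y j * stump s₀ j = ∑ j, stump s₀ j * y j :=
          Finset.sum_congr rfl fun j _ => mul_comm _ _
        rw [this, sub_self]
      | zero => exact inner_zero_right _
      | add x z hx hz ihx ihz => rw [inner_add_right, ihx, ihz, add_zero]
      | smul a x hx ihx => rw [real_inner_smul_right, ihx, mul_zero]
    have hvv : ⟪v, v⟫ = ∑ s ∈ F, (∑ j, stump s j * y j) ^ 2 / ∑ j, stump s j ^ 2 := by
      nth_rewrite 1 [hv]
      rw [sum_inner]
      refine Finset.sum_congr rfl fun s hs => ?_
      rw [real_inner_smul_left, real_inner_comm v (stump s), hvw s hs, sum_stump_sq]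
      ring
    rw [h1, hproj, ← real_inner_self_eq_norm_sq]
    exact hvv.symm
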